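/- arXiv:2504.18895 — 2 statements merged into one kernel-verified Lean document; each statement's English description precedes it below -/
import Mathlib

section
/- Let Ω ⊆ ℝ^d be an open set. Let 𝒢²(Ω) denote the closure in L²(Ω;ℂ^d) of { (∇φ)|_Ω : φ ∈ C_c^∞(ℝ^d;ℂ) }, and let 𝒫 denote the orthogonal projection of L²(Ω;ℂ^d) onto the orthogonal complement 𝒢²(Ω)^⊥. If u ∈ D(−Δ_H), then 𝒫u ∈ D(−Δ_H) and −Δ_H(𝒫u) = 𝒫(−Δ_H u). -/
/-!
Elements of the closure of the gradients are curl-free: for a gradient this is integration by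
parts plus the symmetry of second derivatives, and it passes to the `L²`-closure because pairing
with the curl against a fixed test function is an inner product with a fixed `L²` field.
On the other hand `𝒫u` is orthogonal to every `∇φ`, `φ ∈ C_c^∞(ℝ^d)`, which is condition (ii)
with `h = 0`. Hence `𝒫u ∈ V(Ω)` with `D_-(𝒫u) = D_-(u)` and `div 𝒫u = 0`, so
`a(𝒫u, v) = a(u, 𝒫v) = ⟨-Δ_H u, 𝒫v⟩ = ⟨𝒫(-Δ_H u), v⟩` by symmetry of `𝒫`. The representing
vector is unique because `V(Ω)` contains `C_c^∞(Ω;ℂ^d)`.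
-/


open MeasureTheory Complex Filter Topology
open scoped BigOperators ComplexConjugate

noncomputable section
attribute [local instance] Classical.propDecidable

/-- The domain `ℝ^d`. -/
abbrev Edom (d : ℕ) := EuclideanSpace ℝ (Fin d)

/-- The codomain `ℂ^d`. -/
abbrev Fcod (d : ℕ) := EuclideanSpace ℂ (Fin d)

/-- Lebesgue measure restricted to `Ω`. -/
def muOm (d : ℕ) (Ω : Set (Edom d)) : Measure (Edom d) := volume.restrict Ω

/-- The Hilbert space `L²(Ω; ℂ^d)`. -/
abbrev Hsp (d : ℕ) (Ω : Set (Edom d)) := Lp (Fcod d) 2 (muOm d Ω)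

/-- The `j`-th partial derivative of a scalar function. -/
def pd {d : ℕ} (j : Fin d) (φ : Edom d → ℂ) (x : Edom d) : ℂ :=
  fderiv ℝ φ x (EuclideanSpace.single j 1)

/-- Test functions compactly supported in `Ω`. -/
def IsTest {d : ℕ} (Ω : Set (Edom d)) (φ : Edom d → ℂ) : Prop :=
  ContDiff ℝ (⊤ : ℕ∞) φ ∧ HasCompactSupport φ ∧ tsupport φ ⊆ Ω

/-- Condition (i): `g` is the distributional entry `(D_-(u))_{jk} = ∂_j u_k - ∂_k u_j` and
it lies in `L²(Ω)`. -/
def CondRot {d : ℕ} (Ω : Set (Edom d)) (u : Edom d → Fcod d) (j k : Fin d)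
    (g : Edom d → ℂ) : Prop :=
  MemLp g 2 (muOm d Ω) ∧ ∀ φ : Edom d → ℂ, IsTest Ω φ →
    ∫ x, (u x k * pd j φ x - u x j * pd k φ x) ∂(muOm d Ω)
      = - ∫ x, g x * φ x ∂(muOm d Ω)

/-- Condition (ii): `h = div u ∈ L²(Ω)` distributionally, tested against all of
`C_c^∞(ℝ^d)` (which also encodes the vanishing of the normal trace `ν·u` on `∂Ω`). -/
def CondDiv {d : ℕ} (Ω : Set (Edom d)) (u : Edom d → Fcod d) (h : Edom d → ℂ) : Prop :=
  MemLp h 2 (muOm d Ω) ∧ ∀ φ : Edom d → ℂ, ContDiff ℝ (⊤ : ℕ∞) φ → HasCompactSupport φ →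
    ∫ x, (∑ j, u x j * pd j φ x) ∂(muOm d Ω) = - ∫ x, h x * φ x ∂(muOm d Ω)

/-- Membership in the form domain `V(Ω)`. -/
def memV {d : ℕ} (Ω : Set (Edom d)) (u : Hsp d Ω) : Prop :=
  (∀ j k : Fin d, ∃ g, CondRot Ω (⇑u) j k g) ∧ (∃ h, CondDiv Ω (⇑u) h)

/-- A choice of the distributional entry `(D_-(u))_{jk}` (zero junk value otherwise). -/
def gch {d : ℕ} (Ω : Set (Edom d)) (u : Hsp d Ω) (j k : Fin d) : Edom d → ℂ :=
  if hg : ∃ g, CondRot Ω (⇑u) j k g then hg.choose else 0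

/-- A choice of the distributional divergence of `u` (zero junk value otherwise). -/
def hch {d : ℕ} (Ω : Set (Edom d)) (u : Hsp d Ω) : Edom d → ℂ :=
  if hh : ∃ h, CondDiv Ω (⇑u) h then hh.choose else 0

/-- The sesquilinear form
`a(u,v) = (1/2) ∑_{j,k} ∫_Ω g^u_{jk} conj (g^v_{jk}) + ∫_Ω h_u conj (h_v)`. -/
def formA {d : ℕ} (Ω : Set (Edom d)) (u v : Hsp d Ω) : ℂ :=
  (1 / 2 : ℂ) * (∑ j : Fin d, ∑ k : Fin d,
      ∫ x, gch Ω u j k x * conj (gch Ω v j k x) ∂(muOm d Ω))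
    + ∫ x, hch Ω u x * conj (hch Ω v x) ∂(muOm d Ω)

/-- The `L²(Ω;ℂ^d)` pairing `⟨f, v⟩ = ∫_Ω f · conj v` (linear in the first argument). -/
def L2inner {d : ℕ} (Ω : Set (Edom d)) (f v : Hsp d Ω) : ℂ :=
  ∫ x, (∑ k, f x k * conj (v x k)) ∂(muOm d Ω)

/-- Membership in `D(-Δ_H)`. -/
def memD {d : ℕ} (Ω : Set (Edom d)) (u : Hsp d Ω) : Prop :=
  memV Ω u ∧ ∃ f : Hsp d Ω, ∀ v : Hsp d Ω, memV Ω v → formA Ω u v = L2inner Ω f v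

/-- The Hodge Laplacian `-Δ_H` (with zero junk value off the domain). -/
def HLap {d : ℕ} (Ω : Set (Edom d)) (u : Hsp d Ω) : Hsp d Ω :=
  if h : memD Ω u then h.2.choose else 0


/-- The set of (L²-classes of) gradients `(∇φ)|_Ω` of test functions `φ ∈ C_c^∞(ℝ^d;ℂ)`;
its closure in `L²(Ω;ℂ^d)` is the gradient space `𝒢²(Ω)`. -/
def gradTest (d : ℕ) (Ω : Set (Edom d)) : Set (Hsp d Ω) :=
  {u : Hsp d Ω | ∃ φ : Edom d → ℂ, ContDiff ℝ (⊤ : ℕ∞) φ ∧ HasCompactSupport φ ∧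
    ⇑u =ᵐ[muOm d Ω] fun x => (WithLp.toLp 2 (fun j => pd j φ x) : Fcod d)}

open scoped ContDiff InnerProductSpace

section Calculus

variable {d : ℕ} {Ω : Set (Edom d)}

lemma contDiff_pd {φ : Edom d → ℂ} (hφ : ContDiff ℝ ∞ φ) (j : Fin d) : ContDiff ℝ ∞ (pd j φ) :=
  (contDiff_infty_iff_fderiv.1 hφ).2.clm_apply contDiff_const

lemma tsupport_pd_subset (φ : Edom d → ℂ) (j : Fin d) : tsupport (pd j φ) ⊆ tsupport φ :=
  (tsupport_comp_subset (g := fun L : Edom d →L[ℝ] ℂ => L (EuclideanSpace.single j 1)) rfl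
    (fderiv ℝ φ)).trans (tsupport_fderiv_subset ℝ)

lemma HasCompactSupport.pd {φ : Edom d → ℂ} (hφ : HasCompactSupport φ) (j : Fin d) :
    HasCompactSupport (pd j φ) :=
  hφ.mono' ((subset_tsupport _).trans (tsupport_pd_subset φ j))

lemma IsTest.pd {φ : Edom d → ℂ} (hφ : IsTest Ω φ) (j : Fin d) :
    IsTest Ω (pd j φ) :=
  ⟨contDiff_pd hφ.1 j, hφ.2.1.pd j, (tsupport_pd_subset φ j).trans hφ.2.2⟩

lemma isTest_zero : IsTest Ω (fun _ : Edom d => (0 : ℂ)) :=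
  ⟨contDiff_const, HasCompactSupport.zero, by simp⟩

lemma IsTest.conj {φ : Edom d → ℂ} (hφ : IsTest Ω φ) : IsTest Ω (fun x => conj (φ x)) :=
  ⟨conjCLE.contDiff.comp hφ.1, hφ.2.1.comp_left (map_zero _),
    (tsupport_comp_subset (map_zero _) φ).trans hφ.2.2⟩

lemma pd_conj (φ : Edom d → ℂ) (j : Fin d) (x : Edom d) :
    pd j (fun y => conj (φ y)) x = conj (pd j φ x) := by
  simp only [pd, RCLike.star_def.symm, fderiv_star]
  rfl

lemma pd_pd_comm {ψ : Edom d → ℂ} (hψ : ContDiff ℝ ∞ ψ) (j k : Fin d) (x : Edom d) :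
    pd j (pd k ψ) x = pd k (pd j ψ) x := by
  have hψ' : Differentiable ℝ (fderiv ℝ ψ) :=
    (contDiff_infty_iff_fderiv.1 hψ).2.differentiable (by simp)
  have key : ∀ m n : Fin d, pd m (pd n ψ) x
      = fderiv ℝ (fderiv ℝ ψ) x (EuclideanSpace.single m 1) (EuclideanSpace.single n 1) := by
    intro m n
    change fderiv ℝ (fun y => fderiv ℝ ψ y (EuclideanSpace.single n 1)) x _ = _
    rw [fderiv_clm_apply (hψ' x) (differentiableAt_const _)]
    simp
  rw [key, key, hψ.contDiffAt.isSymmSndFDerivAt (by simp [ENat.LEInfty.out])]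

end Calculus

section Integration

variable {d : ℕ} {Ω : Set (Edom d)}

instance : IsFiniteMeasureOnCompacts (muOm d Ω) :=
  inferInstanceAs (IsFiniteMeasureOnCompacts (volume.restrict Ω))

instance : IsLocallyFiniteMeasure (muOm d Ω) :=
  inferInstanceAs (IsLocallyFiniteMeasure (volume.restrict Ω))

lemma integral_muOm_eq_integral {E : Type*} [NormedAddCommGroup E] [NormedSpace ℝ E]
    {f : Edom d → E} (hf : ∀ x ∉ Ω, f x = 0) : ∫ x, f x ∂muOm d Ω = ∫ x, f x :=
  setIntegral_eq_integral_of_forall_compl_eq_zero hf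

lemma IsTest.apply_eq_zero {φ : Edom d → ℂ} (hφ : IsTest Ω φ) {x : Edom d} (hx : x ∉ Ω) :
    φ x = 0 :=
  image_eq_zero_of_notMem_tsupport fun h => hx (hφ.2.2 h)

lemma IsTest.memLp {φ : Edom d → ℂ} (hφ : IsTest Ω φ) : MemLp φ 2 (muOm d Ω) :=
  hφ.1.continuous.memLp_of_hasCompactSupport hφ.2.1

lemma IsTest.integrable_mul {φ f : Edom d → ℂ} (hφ : IsTest Ω φ) (hf : Continuous f)
    {μ : Measure (Edom d)} [IsFiniteMeasureOnCompacts μ] :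
    Integrable (fun x => φ x * f x) μ :=
  (hφ.1.continuous.mul hf).integrable_of_hasCompactSupport hφ.2.1.mul_right

lemma integral_mul_pd_eq_neg_pd_mul {f g : Edom d → ℂ} (hf : IsTest Ω f) (hg : ContDiff ℝ ∞ g)
    (j : Fin d) : ∫ x, f x * pd j g x ∂muOm d Ω = -∫ x, pd j f x * g x ∂muOm d Ω := by
  rw [integral_muOm_eq_integral fun x hx => by rw [hf.apply_eq_zero hx, zero_mul],
    integral_muOm_eq_integral fun x hx => by rw [(hf.pd j).apply_eq_zero hx, zero_mul]]
  exact integral_mul_fderiv_eq_neg_fderiv_mul_of_integrable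
    ((hf.pd j).integrable_mul hg.continuous) (hf.integrable_mul (contDiff_pd hg j).continuous)
    (hf.integrable_mul hg.continuous)
    (fun x _ => hf.1.differentiable (by simp) x) (fun x _ => hg.differentiable (by simp) x)

end Integration

section L2

variable {d : ℕ} {Ω : Set (Edom d)}

lemma L2inner_eq_inner (f v : Hsp d Ω) : L2inner Ω f v = ⟪v, f⟫_ℂ := by
  rw [L2inner, L2.inner_def]
  refine integral_congr_ae (Filter.Eventually.of_forall fun x => ?_)
  simp only [PiLp.inner_apply, RCLike.inner_apply]

lemma exists_Lp_ae_eq_single {α ι 𝕜 : Type*} [MeasurableSpace α] {μ : Measure α} [Fintype ι]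
    [DecidableEq ι] [RCLike 𝕜] {p : ENNReal} {a : α → 𝕜} (ha : MemLp a p μ) (m : ι) :
    ∃ F : Lp (EuclideanSpace 𝕜 ι) p μ, ⇑F =ᵐ[μ] fun x => EuclideanSpace.single m (a x) := by
  have hF : MemLp (fun x => EuclideanSpace.single m (a x)) p μ := by
    refine MemLp.of_eval_piLp fun i => ?_
    by_cases hi : i = m
    · subst hi; simpa using ha
    · simp [hi]
  exact ⟨hF.toLp _, hF.coeFn_toLp⟩

lemma inner_eq_integral_of_ae_eq_single {α ι 𝕜 : Type*} [MeasurableSpace α] {μ : Measure α}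
    [Fintype ι] [DecidableEq ι] [RCLike 𝕜] {F w : Lp (EuclideanSpace 𝕜 ι) 2 μ} {a : α → 𝕜}
    {m : ι} (hF : ⇑F =ᵐ[μ] fun x => EuclideanSpace.single m (a x)) :
    ⟪F, w⟫_𝕜 = ∫ x, conj (a x) * w x m ∂μ := by
  rw [L2.inner_def]
  exact integral_congr_ae (hF.mono fun x hx => by simp only [hx, EuclideanSpace.inner_single_left])

lemma ae_eq_of_forall_integral_mul_isTest_eq (hΩ : IsOpen Ω) {f g : Edom d → ℂ}
    (hf : LocallyIntegrable f (muOm d Ω)) (hg : LocallyIntegrable g (muOm d Ω))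
    (h : ∀ φ, IsTest Ω φ → ∫ x, f x * φ x ∂muOm d Ω = ∫ x, g x * φ x ∂muOm d Ω) :
    f =ᵐ[muOm d Ω] g := by
  have hzero := hΩ.ae_eq_zero_of_integral_contDiff_smul_eq_zero ((hf.sub hg).locallyIntegrableOn Ω)
    fun ψ hψ hψc hψΩ => by
      have hψ' : IsTest Ω (fun x => (ψ x : ℂ)) :=
        ⟨ofRealCLM.contDiff.comp hψ, hψc.comp_left ofReal_zero,
          (tsupport_comp_subset ofReal_zero ψ).trans hψΩ⟩
      have hint : ∀ {e : Edom d → ℂ}, LocallyIntegrable e (muOm d Ω) →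
          Integrable (fun x => e x * (ψ x : ℂ)) (muOm d Ω) := fun he =>
        he.integrable_smul_right_of_hasCompactSupport hψ'.1.continuous hψ'.2.1
      simp_rw [Pi.sub_apply, smul_sub, real_smul, mul_comm (ψ _ : ℂ)]
      rw [integral_sub (hint hf) (hint hg), h _ hψ', sub_self]
  filter_upwards [hzero, ae_restrict_mem hΩ.measurableSet] with x hx hxΩ
  exact sub_eq_zero.1 (hx hxΩ)

lemma CondRot.ae_eq (hΩ : IsOpen Ω) {u : Edom d → Fcod d} {j k : Fin d} {g g' : Edom d → ℂ}
    (hg : CondRot Ω u j k g) (hg' : CondRot Ω u j k g') : g =ᵐ[muOm d Ω] g' :=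
  ae_eq_of_forall_integral_mul_isTest_eq hΩ (hg.1.locallyIntegrable one_le_two)
    (hg'.1.locallyIntegrable one_le_two) fun φ hφ => neg_inj.1 ((hg.2 φ hφ).symm.trans (hg'.2 φ hφ))

lemma CondDiv.ae_eq (hΩ : IsOpen Ω) {u : Edom d → Fcod d} {h h' : Edom d → ℂ}
    (hh : CondDiv Ω u h) (hh' : CondDiv Ω u h') : h =ᵐ[muOm d Ω] h' :=
  ae_eq_of_forall_integral_mul_isTest_eq hΩ (hh.1.locallyIntegrable one_le_two)
    (hh'.1.locallyIntegrable one_le_two) fun φ hφ =>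
      neg_inj.1 ((hh.2 φ hφ.1 hφ.2.1).symm.trans (hh'.2 φ hφ.1 hφ.2.1))

end L2

section Gradients

variable {d : ℕ} {Ω : Set (Edom d)}

lemma integral_curl_grad_eq_zero {ψ φ : Edom d → ℂ} (hψ : ContDiff ℝ ∞ ψ) (hφ : IsTest Ω φ)
    (j k : Fin d) :
    ∫ x, (pd k ψ x * pd j φ x - pd j ψ x * pd k φ x) ∂muOm d Ω = 0 := by
  have hint : ∀ a b, Integrable (fun x => pd a ψ x * pd b φ x) (muOm d Ω) := fun a b => by
    simpa only [mul_comm] using (hφ.pd b).integrable_mul (contDiff_pd hψ a).continuous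
  have hibp : ∀ a b, ∫ x, pd a ψ x * pd b φ x ∂muOm d Ω = -∫ x, φ x * pd b (pd a ψ) x ∂muOm d Ω :=
    fun a b => by
      rw [integral_mul_pd_eq_neg_pd_mul hφ (contDiff_pd hψ a), neg_neg]
      simp only [mul_comm]
  rw [integral_sub (hint k j) (hint j k), hibp, hibp]
  simp only [pd_pd_comm hψ j k, sub_self]

lemma exists_inner_eq_integral_curl {φ : Edom d → ℂ} (hφ : IsTest Ω φ) (j k : Fin d) :
    ∃ G : Hsp d Ω, ∀ w : Hsp d Ω,
      ⟪G, w⟫_ℂ = ∫ x, (w x k * pd j φ x - w x j * pd k φ x) ∂muOm d Ω := by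
  obtain ⟨G₁, hG₁⟩ := exists_Lp_ae_eq_single (hφ.pd j).memLp.star k
  obtain ⟨G₂, hG₂⟩ := exists_Lp_ae_eq_single (hφ.pd k).memLp.star j
  refine ⟨G₁ - G₂, fun w => ?_⟩
  have hint : ∀ a b, Integrable (fun x => w x a * pd b φ x) (muOm d Ω) := fun a b =>
    ((Lp.memLp w).eval_piLp a).integrable_mul (hφ.pd b).memLp
  rw [inner_sub_left, inner_eq_integral_of_ae_eq_single hG₁,
    inner_eq_integral_of_ae_eq_single hG₂, integral_sub (hint k j) (hint j k)]
  simp only [Pi.star_apply, RCLike.star_def, conj_conj, mul_comm]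

lemma integral_curl_eq_of_sub_mem_closure {φ : Edom d → ℂ} (hφ : IsTest Ω φ) (j k : Fin d)
    {u u' : Hsp d Ω} (h : u - u' ∈ closure (gradTest d Ω)) :
    ∫ x, (u x k * pd j φ x - u x j * pd k φ x) ∂muOm d Ω
      = ∫ x, (u' x k * pd j φ x - u' x j * pd k φ x) ∂muOm d Ω := by
  obtain ⟨G, hG⟩ := exists_inner_eq_integral_curl hφ j k
  have hgrad : gradTest d Ω ⊆ {w | ⟪G, w⟫_ℂ = 0} := by
    rintro w ⟨ψ, hψ, -, hw⟩
    rw [Set.mem_ofPred_eq, hG, ← integral_curl_grad_eq_zero hψ hφ j k]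
    exact integral_congr_ae (hw.mono fun x hx => by simp only [hx, PiLp.toLp_apply])
  have hclosed : IsClosed {w : Hsp d Ω | ⟪G, w⟫_ℂ = 0} :=
    isClosed_eq (continuous_const.inner continuous_id) continuous_const
  rw [← hG, ← hG, ← sub_eq_zero, ← inner_sub_right]
  exact closure_minimal hgrad hclosed h

lemma CondRot.of_sub_mem_closure {u u' : Hsp d Ω} {j k : Fin d} {g : Edom d → ℂ}
    (hg : CondRot Ω u j k g) (h : u - u' ∈ closure (gradTest d Ω)) : CondRot Ω u' j k g :=
  ⟨hg.1, fun φ hφ => (integral_curl_eq_of_sub_mem_closure hφ j k h).symm.trans (hg.2 φ hφ)⟩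

lemma condDiv_zero_of_forall_L2inner_gradTest {u : Hsp d Ω}
    (h : ∀ w ∈ gradTest d Ω, L2inner Ω u w = 0) : CondDiv Ω u 0 := by
  refine ⟨MemLp.zero, fun φ hφ hφc => ?_⟩
  have hψ : ContDiff ℝ ∞ (fun x => conj (φ x)) := conjCLE.contDiff.comp hφ
  have hψc : HasCompactSupport (fun x => conj (φ x)) := hφc.comp_left (map_zero _)
  have hgrad : MemLp (fun x => (WithLp.toLp 2 (fun j => pd j (fun y => conj (φ y)) x) : Fcod d))
      2 (muOm d Ω) :=
    MemLp.of_eval_piLp fun j => (contDiff_pd hψ j).continuous.memLp_of_hasCompactSupport (hψc.pd j)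
  have hw := h _ ⟨_, hψ, hψc, hgrad.coeFn_toLp⟩
  rw [L2inner] at hw
  simp only [Pi.zero_apply, zero_mul, integral_zero, neg_zero]
  rw [← hw]
  refine integral_congr_ae (hgrad.coeFn_toLp.mono fun x hx => ?_)
  dsimp only
  rw [hx]
  simp only [pd_conj, conj_conj]

end Gradients

section TestFields

variable {d : ℕ} {Ω : Set (Edom d)}

lemma memV_of_ae_eq_isTest {F : Hsp d Ω} {C : Fin d → Edom d → ℂ} (hC : ∀ i, IsTest Ω (C i))
    (hF : ⇑F =ᵐ[muOm d Ω] fun x => WithLp.toLp 2 (fun i => C i x)) : memV Ω F := by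
  have hint : ∀ i j {φ : Edom d → ℂ}, ContDiff ℝ ∞ φ →
      Integrable (fun x => C i x * pd j φ x) (muOm d Ω) := fun i j φ hφ =>
    (hC i).integrable_mul (contDiff_pd hφ j).continuous
  have hint' : ∀ i j {φ : Edom d → ℂ}, ContDiff ℝ ∞ φ →
      Integrable (fun x => pd j (C i) x * φ x) (muOm d Ω) := fun i j φ hφ =>
    ((hC i).pd j).integrable_mul hφ.continuous
  refine ⟨fun j k => ⟨fun x => pd j (C k) x - pd k (C j) x,
    ((hC k).pd j).memLp.sub ((hC j).pd k).memLp, fun φ hφ => ?_⟩,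
    ⟨fun x => ∑ i, pd i (C i) x, memLp_finsetSum _ fun i _ => ((hC i).pd i).memLp,
      fun φ hφ _ => ?_⟩⟩
  · calc ∫ x, (F x k * pd j φ x - F x j * pd k φ x) ∂muOm d Ω
        = ∫ x, (C k x * pd j φ x - C j x * pd k φ x) ∂muOm d Ω :=
          integral_congr_ae (hF.mono fun x hx => by simp only [hx, PiLp.toLp_apply])
      _ = -∫ x, (pd j (C k) x - pd k (C j) x) * φ x ∂muOm d Ω := by
          rw [integral_sub (hint k j hφ.1) (hint j k hφ.1),
            integral_mul_pd_eq_neg_pd_mul (hC k) hφ.1, integral_mul_pd_eq_neg_pd_mul (hC j) hφ.1]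
          simp only [sub_mul]
          rw [integral_sub (hint' k j hφ.1) (hint' j k hφ.1)]
          ring
  · calc ∫ x, ∑ i, F x i * pd i φ x ∂muOm d Ω = ∫ x, ∑ i, C i x * pd i φ x ∂muOm d Ω :=
          integral_congr_ae (hF.mono fun x hx => by simp only [hx, PiLp.toLp_apply])
      _ = -∫ x, (∑ i, pd i (C i) x) * φ x ∂muOm d Ω := by
          rw [integral_finsetSum _ fun i _ => hint i i hφ]
          simp only [integral_mul_pd_eq_neg_pd_mul (hC _) hφ, Finset.sum_mul,
            Finset.sum_neg_distrib]
          rw [integral_finsetSum _ fun i _ => hint' i i hφ]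

lemma memV_of_ae_eq_single {F : Hsp d Ω} {φ : Edom d → ℂ} (hφ : IsTest Ω φ) {m : Fin d}
    (hF : ⇑F =ᵐ[muOm d Ω] fun x => EuclideanSpace.single m (φ x)) : memV Ω F := by
  refine memV_of_ae_eq_isTest (C := fun i x => (Pi.single m (φ x) : Fin d → ℂ) i) (fun i => ?_) hF
  by_cases hi : i = m
  · subst hi; simpa using hφ
  · simpa [Pi.single_eq_of_ne hi] using isTest_zero

lemma eq_of_forall_memV_L2inner_eq (hΩ : IsOpen Ω) {A B : Hsp d Ω}
    (h : ∀ v, memV Ω v → L2inner Ω A v = L2inner Ω B v) : A = B := by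
  have hcoord : ∀ m, (fun x => A x m) =ᵐ[muOm d Ω] fun x => B x m := fun m =>
    ae_eq_of_forall_integral_mul_isTest_eq hΩ
      (((Lp.memLp A).eval_piLp m).locallyIntegrable one_le_two)
      (((Lp.memLp B).eval_piLp m).locallyIntegrable one_le_two) fun ψ hψ => by
        obtain ⟨v, hv⟩ := exists_Lp_ae_eq_single hψ.conj.memLp m
        have hAB := h v (memV_of_ae_eq_single hψ.conj hv)
        simp only [L2inner_eq_inner, inner_eq_integral_of_ae_eq_single hv, conj_conj] at hAB
        simpa only [mul_comm] using hAB
  apply Lp.ext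
  filter_upwards [ae_all_iff.2 hcoord] with x hx
  exact PiLp.ext hx

end TestFields

theorem inner_proj_left_eq_inner_proj_right {𝕜 E : Type*} [RCLike 𝕜] [SeminormedAddCommGroup E]
    [InnerProductSpace 𝕜 E] {K : Set E} {P : E → E} (hmem : ∀ x, x - P x ∈ K)
    (horth : ∀ x, ∀ w ∈ K, ⟪w, P x⟫_𝕜 = 0) (x y : E) : ⟪P x, y⟫_𝕜 = ⟪x, P y⟫_𝕜 := by
  have hx : ⟪x - P x, P y⟫_𝕜 = 0 := horth y _ (hmem x)
  have hy : ⟪P x, y - P y⟫_𝕜 = 0 := by rw [← inner_conj_symm, horth x _ (hmem y), map_zero]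
  rw [inner_sub_left, sub_eq_zero] at hx
  rw [inner_sub_right, sub_eq_zero] at hy
  rw [hx, hy]

section Projection

variable {d : ℕ} {Ω : Set (Edom d)}

lemma gch_spec {u : Hsp d Ω} {j k : Fin d} (h : ∃ g, CondRot Ω u j k g) :
    CondRot Ω u j k (gch Ω u j k) := by
  rw [gch, dif_pos h]
  exact h.choose_spec

lemma hch_spec {u : Hsp d Ω} (h : ∃ g, CondDiv Ω u g) : CondDiv Ω u (hch Ω u) := by
  rw [hch, dif_pos h]
  exact h.choose_spec

lemma HLap_spec {u : Hsp d Ω} (hu : memD Ω u) (v : Hsp d Ω) (hv : memV Ω v) :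
    formA Ω u v = L2inner Ω (HLap Ω u) v := by
  rw [HLap, dif_pos hu]
  exact hu.2.choose_spec v hv

lemma CondRot.gch_ae_eq (hΩ : IsOpen Ω) {u : Hsp d Ω} {j k : Fin d} {g : Edom d → ℂ}
    (hg : CondRot Ω u j k g) : gch Ω u j k =ᵐ[muOm d Ω] g :=
  (gch_spec ⟨g, hg⟩).ae_eq hΩ hg

lemma CondDiv.hch_ae_eq (hΩ : IsOpen Ω) {u : Hsp d Ω} {g : Edom d → ℂ}
    (hg : CondDiv Ω u g) : hch Ω u =ᵐ[muOm d Ω] g :=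
  (hch_spec ⟨g, hg⟩).ae_eq hΩ hg

lemma memV_of_sub_mem_closure {u u' : Hsp d Ω} (hu : memV Ω u)
    (h : u - u' ∈ closure (gradTest d Ω)) (h' : ∀ w ∈ gradTest d Ω, L2inner Ω u' w = 0) :
    memV Ω u' :=
  ⟨fun j k => (hu.1 j k).imp fun _ hg => hg.of_sub_mem_closure h,
    ⟨0, condDiv_zero_of_forall_L2inner_gradTest h'⟩⟩

lemma formA_proj_left_eq_formA_proj_right (hΩ : IsOpen Ω) {P : Hsp d Ω → Hsp d Ω}
    (hPmem : ∀ x, x - P x ∈ closure (gradTest d Ω))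
    (hPorth : ∀ x, ∀ w ∈ closure (gradTest d Ω), L2inner Ω (P x) w = 0)
    {u v : Hsp d Ω} (hu : memV Ω u) (hv : memV Ω v) : formA Ω (P u) v = formA Ω u (P v) := by
  have hcurl : ∀ {w}, memV Ω w → ∀ j k, gch Ω (P w) j k =ᵐ[muOm d Ω] gch Ω w j k :=
    fun hw j k => ((gch_spec (hw.1 j k)).of_sub_mem_closure (hPmem _)).gch_ae_eq hΩ
  have hdiv : ∀ w, hch Ω (P w) =ᵐ[muOm d Ω] 0 := fun w =>
    (condDiv_zero_of_forall_L2inner_gradTest fun z hz =>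
      hPorth w z (subset_closure hz)).hch_ae_eq hΩ
  rw [formA, formA, integral_eq_zero_of_ae ((hdiv u).mono fun x hx => by simp [hx]),
    integral_eq_zero_of_ae ((hdiv v).mono fun x hx => by simp [hx])]
  congr 2
  refine Finset.sum_congr rfl fun j _ => Finset.sum_congr rfl fun k _ => integral_congr_ae ?_
  filter_upwards [hcurl hu j k, hcurl hv j k] with x hxu hxv
  rw [hxu, hxv]

lemma L2inner_proj_left_eq_L2inner_proj_right {P : Hsp d Ω → Hsp d Ω}
    (hPmem : ∀ x, x - P x ∈ closure (gradTest d Ω))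
    (hPorth : ∀ x, ∀ w ∈ closure (gradTest d Ω), L2inner Ω (P x) w = 0) (f v : Hsp d Ω) :
    L2inner Ω (P f) v = L2inner Ω f (P v) := by
  simp only [L2inner_eq_inner] at hPorth ⊢
  exact (inner_proj_left_eq_inner_proj_right hPmem hPorth v f).symm

end Projection

/-- The orthogonal projection `Pperp` of `L²(Ω;ℂ^d)` onto `𝒢²(Ω)^⊥`
(characterized by `x - Pperp x ∈ 𝒢²(Ω)` and `Pperp x ⟂ 𝒢²(Ω)`) commutes with the Hodge
Laplacian: if `u ∈ D(-Δ_H)` then `Pperp u ∈ D(-Δ_H)` and `-Δ_H (Pperp u) = Pperp (-Δ_H u)`. -/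
theorem proj_gradPerp_commutes_hodgeLaplacian (d : ℕ) (Ω : Set (Edom d)) (hΩ : IsOpen Ω)
    (Pperp : Hsp d Ω → Hsp d Ω)
    (hPmem : ∀ x : Hsp d Ω, x - Pperp x ∈ closure (gradTest d Ω))
    (hPorth : ∀ x : Hsp d Ω, ∀ w ∈ closure (gradTest d Ω), L2inner Ω (Pperp x) w = 0) :
    ∀ u : Hsp d Ω, memD Ω u → memD Ω (Pperp u) ∧ HLap Ω (Pperp u) = Pperp (HLap Ω u) := by
  intro u hu
  have hPV : ∀ {v}, memV Ω v → memV Ω (Pperp v) := fun hv =>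
    memV_of_sub_mem_closure hv (hPmem _) fun w hw => hPorth _ w (subset_closure hw)
  have hrep : ∀ v, memV Ω v → formA Ω (Pperp u) v = L2inner Ω (Pperp (HLap Ω u)) v :=
    fun v hv => by
      rw [formA_proj_left_eq_formA_proj_right hΩ hPmem hPorth hu.1 hv,
        L2inner_proj_left_eq_L2inner_proj_right hPmem hPorth, HLap_spec hu _ (hPV hv)]
  have hD : memD Ω (Pperp u) := ⟨hPV hu.1, _, hrep⟩
  exact ⟨hD, eq_of_forall_memV_L2inner_eq hΩ fun v hv => by rw [← HLap_spec hD v hv, hrep v hv]⟩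
end
end

section
/- Let θ ∈ (0, π/2), c ∈ (0, sin θ), M ≥ 0, and let F : ℂ → ℂ be complex differentiable at every point of the open sector Σ_θ° with |F(z)| ≤ M for all z ∈ Σ_θ°. Then for every t > 0 and every k ∈ ℕ, the k-th complex derivative of F at the real point t satisfies |F^{(k)}(t)| ≤ k!·M / (c·t)^k; equivalently, sup_{t>0} t^k |F^{(k)}(t)| ≤ (k!/c^k)·M. -/
open Real

/-!
The disc of radius `c t` about `t > 0` stays inside `Σ_θ°`: a point `z` of it has `Re z > 0`, and
the distance `t |Im z| / ‖z‖` from `t` to the line `ℝ z` is less than `t sin θ`, so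
`sin |arg z| < sin θ`. Cauchy's estimate on the circle of radius `c t` then gives the bound.
-/

/-- The open sector `Σ_θ° = {z ≠ 0 : |arg z| < θ}`. -/
def openSector (θ : ℝ) : Set ℂ := {z : ℂ | z ≠ 0 ∧ |Complex.arg z| < θ}

-- `Im (conj z * (z - t)) = t Im z`.
lemma abs_mul_abs_im_le_norm_mul_norm_sub (z : ℂ) (t : ℝ) :
    |t| * |z.im| ≤ ‖z‖ * ‖z - t‖ := by
  calc |t| * |z.im| = |((starRingEnd ℂ) z * (z - t)).im| := by
        simp only [Complex.mul_im, Complex.conj_re, Complex.conj_im, Complex.sub_re,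
          Complex.sub_im, Complex.ofReal_re, Complex.ofReal_im, ← abs_mul]
        congr 1
        ring
    _ ≤ ‖(starRingEnd ℂ) z * (z - t)‖ := Complex.abs_im_le_norm _
    _ = ‖z‖ * ‖z - t‖ := by rw [norm_mul, Complex.norm_conj]

lemma mem_openSector_of_norm_sub_lt {θ t : ℝ} {z : ℂ} (hθ0 : 0 ≤ θ) (hθ : θ ≤ π / 2)
    (hz : ‖z - t‖ < t * sin θ) : z ∈ openSector θ := by
  have hsin : sin θ ≤ 1 := sin_le_one θ
  have ht : 0 < t :=
    pos_of_mul_pos_left ((norm_nonneg _).trans_lt hz)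
      (sin_nonneg_of_nonneg_of_le_pi hθ0 (by linarith [pi_pos]))
  have hre : 0 < z.re := by
    have := Complex.abs_re_le_norm (z - t)
    rw [Complex.sub_re, Complex.ofReal_re] at this
    nlinarith [abs_le.mp this]
  have hz0 : z ≠ 0 := fun h => by simp [h] at hre
  have hnorm : 0 < ‖z‖ := norm_pos_iff.mpr hz0
  have harg : |Complex.arg z| < π / 2 := Complex.abs_arg_lt_pi_div_two_iff.mpr (Or.inl hre)
  have hsin_arg : sin |Complex.arg z| < sin θ := by
    rw [← abs_sin_eq_sin_abs_of_abs_le_pi (by linarith [pi_pos]), Complex.sin_arg, abs_div,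
      abs_norm, div_lt_iff₀ hnorm]
    have := abs_mul_abs_im_le_norm_mul_norm_sub z t
    rw [abs_of_pos ht] at this
    nlinarith
  refine ⟨hz0, (strictMonoOn_sin.lt_iff_lt ?_ ?_).mp hsin_arg⟩
  · exact ⟨by linarith [abs_nonneg (Complex.arg z), pi_pos], harg.le⟩
  · exact ⟨by linarith [pi_pos], hθ⟩

lemma closedBall_subset_openSector {θ t r : ℝ} (hθ0 : 0 ≤ θ) (hθ : θ ≤ π / 2)
    (hr : r < t * sin θ) : Metric.closedBall (t : ℂ) r ⊆ openSector θ := fun _ hz =>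
  mem_openSector_of_norm_sub_lt hθ0 hθ ((mem_closedBall_iff_norm.mp hz).trans_lt hr)

theorem cauchy_estimates_on_sector_general (θ : ℝ) (hθ0 : 0 < θ) (hθ : θ < π / 2)
    (c : ℝ) (hc0 : 0 < c) (hc : c < Real.sin θ)
    (M : ℝ) (F : ℂ → ℂ)
    (hF : ∀ z ∈ openSector θ, DifferentiableAt ℂ F z)
    (hFb : ∀ z ∈ openSector θ, ‖F z‖ ≤ M) :
    ∀ t : ℝ, 0 < t → ∀ k : ℕ,
      ‖iteratedDeriv k F (t : ℂ)‖ ≤ (k.factorial : ℝ) * M / (c * t) ^ k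
      ∧ t ^ k * ‖iteratedDeriv k F (t : ℂ)‖ ≤ ((k.factorial : ℝ) / c ^ k) * M := by
  intro t ht k
  have hball : Metric.closedBall (t : ℂ) (c * t) ⊆ openSector θ :=
    closedBall_subset_openSector hθ0.le hθ.le (by nlinarith)
  have hdiff : DiffContOnCl ℂ F (Metric.ball (t : ℂ) (c * t)) :=
    DifferentiableOn.diffContOnCl_ball (fun z hz => (hF z hz).differentiableWithinAt) hball
  have hest := Complex.norm_iteratedDeriv_le_of_forall_mem_sphere_norm_le k (mul_pos hc0 ht)
    hdiff fun z hz => hFb z (hball (Metric.sphere_subset_closedBall hz))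
  refine ⟨hest, ?_⟩
  calc t ^ k * ‖iteratedDeriv k F (t : ℂ)‖
        ≤ t ^ k * ((k.factorial : ℝ) * M / (c * t) ^ k) := by gcongr
    _ = ((k.factorial : ℝ) / c ^ k) * M := by
        field_simp
        ring

theorem cauchy_estimates_on_sector (θ : ℝ) (hθ0 : 0 < θ) (hθ : θ < π / 2)
    (c : ℝ) (hc0 : 0 < c) (hc : c < Real.sin θ)
    (M : ℝ) (hM : 0 ≤ M) (F : ℂ → ℂ)
    (hF : ∀ z ∈ openSector θ, DifferentiableAt ℂ F z)
    (hFb : ∀ z ∈ openSector θ, ‖F z‖ ≤ M) :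
    ∀ t : ℝ, 0 < t → ∀ k : ℕ,
      ‖iteratedDeriv k F (t : ℂ)‖ ≤ (k.factorial : ℝ) * M / (c * t) ^ k
      ∧ t ^ k * ‖iteratedDeriv k F (t : ℂ)‖ ≤ ((k.factorial : ℝ) / c ^ k) * M :=
  cauchy_estimates_on_sector_general θ hθ0 hθ c hc0 hc M F hF hFb
end
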